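/- arXiv:1608.01065 — 3 statements merged into one kernel-verified Lean document; each statement's English description precedes it below -/
import Mathlib

section
/- Define K_{ij} = (M_j^i)* ⊗ A_{ij} where A_{ij} = (Tr ρ_j)^{-1/2} (ρ_j^{1/2} ⊗ |i⟩⟨j|), and let Tr^{(2)} denote the partial trace over the second tensor factor: Tr^{(2)}(a ⊗ b) = Tr(b) a. Then ∑_{i,j} Tr^{(2)}(K_{ij} K_{ij}*) = I. -/
/-!
Since `K K* = (M* M) ⊗ (A A*)`, the partial trace of `K_{ij} K_{ij}*` is
`Tr(A_{ij} A_{ij}*) M_j^i* M_j^i`. As `ρ_j^{1/2}` is Hermitian with square `ρ_j` and `|i⟩⟨j| (|i⟩⟨j|)* = |i⟩⟨i|`, the scalar is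
`Tr ρ_j / Tr ρ_j = 1`, while `M_j^i* M_j^i = B_j^i* B_j^i ⊗ |j⟩⟨j|`. Summing over `i` leaves
`∑_j I ⊗ |j⟩⟨j| = I`.
-/

open Matrix Kronecker BigOperators ComplexOrder

/-- The square root of a positive semidefinite matrix, as defined in the older Mathlib
(removed since then). -/
noncomputable def Matrix.PosSemidef.sqrt {n 𝕜 : Type*} [Fintype n] [RCLike 𝕜] [DecidableEq n]
    {A : Matrix n n 𝕜} (hA : Matrix.PosSemidef A) : Matrix n n 𝕜 :=
  hA.1.eigenvectorUnitary.1 * Matrix.diagonal ((↑) ∘ (√·) ∘ hA.1.eigenvalues) *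
  (star hA.1.eigenvectorUnitary : Matrix n n 𝕜)

/-- Partial trace over the second tensor factor: `Tr⁽²⁾(a ⊗ b) = Tr(b) a`. -/
noncomputable def ptrace2 {α β : Type*} [Fintype β] (M : Matrix (α × β) (α × β) ℂ) : Matrix α α ℂ :=
  Matrix.of fun a a' => ∑ b, M (a, b) (a', b)

open scoped MatrixOrder

namespace Matrix

section Kronecker

variable {ι l m n p R : Type*} [CommSemiring R]

theorem sum_kronecker (s : Finset ι) (X : ι → Matrix l m R) (Y : Matrix n p R) :
    (∑ i ∈ s, X i) ⊗ₖ Y = ∑ i ∈ s, X i ⊗ₖ Y :=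
  map_sum ((kroneckerBilinear (R := R)).flip Y) X s

theorem kronecker_sum (s : Finset ι) (X : Matrix l m R) (Y : ι → Matrix n p R) :
    X ⊗ₖ (∑ i ∈ s, Y i) = ∑ i ∈ s, X ⊗ₖ Y i :=
  map_sum (kroneckerBilinear (R := R) X) Y s

variable [StarRing R] [Fintype m] [Fintype n] [DecidableEq n]

theorem conjTranspose_mul_self_kronecker_single (X : Matrix m m R) (i j : n) :
    (X ⊗ₖ single i j 1)ᴴ * (X ⊗ₖ single i j 1) = (Xᴴ * X) ⊗ₖ single j j (1 : R) := by
  rw [conjTranspose_kronecker, ← mul_kronecker_mul, conjTranspose_single, star_one,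
    single_mul_single_same, one_mul]

theorem trace_mul_conjTranspose_kronecker_single (X : Matrix m m R) (i j : n) :
    ((X ⊗ₖ single i j 1) * (X ⊗ₖ single i j 1)ᴴ).trace = (X * Xᴴ).trace := by
  rw [conjTranspose_kronecker, ← mul_kronecker_mul, conjTranspose_single, star_one,
    single_mul_single_same, one_mul, trace_kronecker, trace_single_eq_same, mul_one]

end Kronecker

namespace PosSemidef

variable {n 𝕜 : Type*} [Fintype n] [RCLike 𝕜] [DecidableEq n] {A : Matrix n n 𝕜}

theorem sqrt_eq_cfcSqrt (hA : A.PosSemidef) : hA.sqrt = CFC.sqrt A := by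
  rw [CFC.sqrt_eq_real_sqrt A hA.nonneg, cfcₙ_eq_cfc, hA.1.cfc_eq, IsHermitian.cfc,
    Unitary.conjStarAlgAut_apply]
  rfl

theorem isHermitian_sqrt (hA : A.PosSemidef) : hA.sqrt.IsHermitian := by
  rw [sqrt_eq_cfcSqrt]
  exact (CFC.sqrt_nonneg A).isSelfAdjoint

theorem sqrt_mul_self (hA : A.PosSemidef) : hA.sqrt * hA.sqrt = A := by
  rw [sqrt_eq_cfcSqrt]
  exact CFC.sqrt_mul_sqrt_self A hA.nonneg

end PosSemidef

end Matrix

theorem ptrace2_kronecker {α β : Type*} [Fintype β] (X : Matrix α α ℂ) (Y : Matrix β β ℂ) :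
    ptrace2 (X ⊗ₖ Y) = Y.trace • X := by
  ext a a'
  simp [ptrace2, trace, Finset.mul_sum, mul_comm]

/-- With `K_{ij} = (M_j^i)* ⊗ A_{ij}`,
`A_{ij} = (Tr ρ_j)^{-1/2}(ρ_j^{1/2} ⊗ |i⟩⟨j|)`, one has `∑_{i,j} Tr⁽²⁾(K_{ij} K_{ij}*) = 1`. -/
theorem oqrw_amplitude_normalization
    {n Λ : Type*} [Fintype n] [Fintype Λ] [DecidableEq n] [DecidableEq Λ]
    (B : Λ → Λ → Matrix n n ℂ)
    (hB : ∀ j, ∑ i, (B i j)ᴴ * B i j = 1)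
    (M : Λ → Λ → Matrix (n × Λ) (n × Λ) ℂ)
    (hM : ∀ i j, M i j = (B i j) ⊗ₖ (Matrix.single i j (1 : ℂ)))
    (ρf : Λ → Matrix n n ℂ)
    (hpos : ∀ j, (ρf j).PosSemidef)
    (htr : ∀ j, 0 < (ρf j).trace)
    (A : Λ → Λ → Matrix (n × Λ) (n × Λ) ℂ)
    (hA : ∀ i j, A i j
        = ((Real.sqrt ((ρf j).trace.re) : ℂ))⁻¹ •
            (((hpos j).sqrt) ⊗ₖ (Matrix.single i j (1 : ℂ))))
    (K : Λ → Λ → Matrix ((n × Λ) × (n × Λ)) ((n × Λ) × (n × Λ)) ℂ)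
    (hK : ∀ i j, K i j = (M i j)ᴴ ⊗ₖ A i j) :
    ∑ i, ∑ j, ptrace2 (K i j * (K i j)ᴴ) = 1 := by
  have hAA : ∀ i j, (A i j * (A i j)ᴴ).trace = 1 := by
    intro i j
    obtain ⟨t, ht, hρt⟩ := RCLike.pos_iff_exists_ofReal.mp (htr j)
    rw [hA, conjTranspose_smul, smul_mul_smul_comm, trace_smul,
      trace_mul_conjTranspose_kronecker_single, (hpos j).isHermitian_sqrt.eq,
      (hpos j).sqrt_mul_self, ← hρt]
    simp only [Complex.coe_algebraMap, Complex.ofReal_re, star_inv₀, Complex.star_def,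
      Complex.conj_ofReal, smul_eq_mul]
    rw [← mul_inv, ← Complex.ofReal_mul, Real.mul_self_sqrt ht.le]
    exact inv_mul_cancel₀ (Complex.ofReal_ne_zero.mpr ht.ne')
  have hterm : ∀ i j, ptrace2 (K i j * (K i j)ᴴ) = ((B i j)ᴴ * B i j) ⊗ₖ single j j 1 := by
    intro i j
    rw [hK, conjTranspose_kronecker, conjTranspose_conjTranspose, ← mul_kronecker_mul,
      ptrace2_kronecker, hAA, one_smul, hM, conjTranspose_mul_self_kronecker_single]
  calc ∑ i, ∑ j, ptrace2 (K i j * (K i j)ᴴ)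
      = ∑ j, (∑ i, (B i j)ᴴ * B i j) ⊗ₖ single j j (1 : ℂ) := by
        simp_rw [hterm, sum_kronecker]
        exact Finset.sum_comm
    _ = 1 := by simp_rw [hB, ← kronecker_sum, sum_single_one, one_kronecker_one]
end

section
/- With E(x ⊗ y) = ∑_{i,j} (M_j^i)* x M_j^i · Tr((ρ_j ⊗ |j⟩⟨j|) y)/Tr(ρ_j) and ρ = ∑_j ρ_j ⊗ |j⟩⟨j|, the two-point function satisfies Tr(ρ E(x₁ ⊗ E(x₂ ⊗ I))) = ∑_v Tr(ρ_v) ψ_v(x₁) ψ_v(x₂), where ψ_v(x) = (Tr ρ_v)^{-1} ∑_i Tr((B_v^i ρ_v (B_v^i)* ⊗ |i⟩⟨i|) x). -/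
/-!
Cyclicity of the trace turns `Tr((ρ_v ⊗ |v⟩⟨v|) (M_j^i)* x M_j^i)` into
`δ_{vj} Tr((B_v^i ρ_v (B_v^i)* ⊗ |i⟩⟨i|) x)`, so the block `ρ_v ⊗ |v⟩⟨v|` of `ρ` picks out of
`E(x ⊗ y)` exactly the terms with `j = v`:
`Tr((ρ_v ⊗ |v⟩⟨v|) E(x ⊗ y)) = ψ_v(x) Tr((ρ_v ⊗ |v⟩⟨v|) y)`.
Applying this twice, with `y = E(x₂ ⊗ I)` and then `y = I`, factorizes each block of the
two-point function.
-/

open Matrix Kronecker BigOperators ComplexOrder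

/-- The transition expectation
`E(x ⊗ y) = ∑_{i,j} (Tr((ρ_j ⊗ |j⟩⟨j|) y)/Tr ρ_j) • (M_j^i)* x M_j^i`. -/
noncomputable def transExp {n Λ : Type*} [Fintype n] [Fintype Λ] [DecidableEq n] [DecidableEq Λ]
    (B : Λ → Λ → Matrix n n ℂ) (ρf : Λ → Matrix n n ℂ)
    (x y : Matrix (n × Λ) (n × Λ) ℂ) : Matrix (n × Λ) (n × Λ) ℂ :=
  ∑ i, ∑ j,
    (((ρf j ⊗ₖ Matrix.single j j (1 : ℂ)) * y).trace / (ρf j).trace) •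
      (((B i j) ⊗ₖ Matrix.single i j (1 : ℂ))ᴴ * x *
        ((B i j) ⊗ₖ Matrix.single i j (1 : ℂ)))

section KroneckerSingle

variable {n Λ R : Type*} [Fintype n] [Fintype Λ] [DecidableEq Λ] [CommRing R] [StarRing R]

theorem kronecker_single_mul_kronecker_single_mul_conjTranspose (C A : Matrix n n R)
    (i j v : Λ) :
    (C ⊗ₖ single i j (1 : R)) * (A ⊗ₖ single v v (1 : R)) * (C ⊗ₖ single i j (1 : R))ᴴ
      = if v = j then (C * A * Cᴴ) ⊗ₖ single i i (1 : R) else 0 := by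
  rw [conjTranspose_kronecker, conjTranspose_single, star_one, ← mul_kronecker_mul,
    ← mul_kronecker_mul]
  split_ifs with hvj
  · rw [hvj, single_mul_single_same, single_mul_single_same, mul_one, mul_one]
  · rw [single_mul_single_of_ne (h := Ne.symm hvj), zero_mul, kronecker_zero]

theorem trace_kronecker_single_mul_conjTranspose_mul_mul (C A : Matrix n n R) (i j v : Λ)
    (x : Matrix (n × Λ) (n × Λ) R) :
    ((A ⊗ₖ single v v (1 : R)) *
        ((C ⊗ₖ single i j (1 : R))ᴴ * x * (C ⊗ₖ single i j (1 : R)))).trace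
      = if v = j then (((C * A * Cᴴ) ⊗ₖ single i i (1 : R)) * x).trace else 0 := by
  rw [← mul_assoc, trace_mul_comm, ← mul_assoc, ← mul_assoc,
    kronecker_single_mul_kronecker_single_mul_conjTranspose]
  split_ifs <;> simp

end KroneckerSingle

theorem trace_kronecker_single_mul_transExp {n Λ : Type*} [Fintype n] [Fintype Λ]
    [DecidableEq n] [DecidableEq Λ] (B : Λ → Λ → Matrix n n ℂ) (ρf : Λ → Matrix n n ℂ) (v : Λ)
    (x y : Matrix (n × Λ) (n × Λ) ℂ) :
    ((ρf v ⊗ₖ single v v (1 : ℂ)) * transExp B ρf x y).trace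
      = ((ρf v ⊗ₖ single v v (1 : ℂ)) * y).trace / (ρf v).trace *
        ∑ i, (((B i v * ρf v * (B i v)ᴴ) ⊗ₖ single i i (1 : ℂ)) * x).trace := by
  simp only [transExp, Finset.mul_sum, Matrix.mul_smul, trace_sum, trace_smul, smul_eq_mul,
    trace_kronecker_single_mul_conjTranspose_mul_mul, mul_ite, mul_zero, Finset.sum_ite_eq,
    Finset.mem_univ, if_true]

theorem qmc_two_point_function_general
    {n Λ : Type*} [Fintype n] [Fintype Λ] [DecidableEq n] [DecidableEq Λ]
    (B : Λ → Λ → Matrix n n ℂ)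
    (ρf : Λ → Matrix n n ℂ)
    (ρ : Matrix (n × Λ) (n × Λ) ℂ)
    (hρ : ρ = ∑ j, (ρf j) ⊗ₖ (Matrix.single j j (1 : ℂ)))
    (ψ : Λ → Matrix (n × Λ) (n × Λ) ℂ → ℂ)
    (hψ : ∀ v x, ψ v x = ((ρf v).trace)⁻¹ *
        ∑ i, (((B i v * ρf v * (B i v)ᴴ) ⊗ₖ Matrix.single i i (1 : ℂ)) * x).trace)
    (x₁ x₂ : Matrix (n × Λ) (n × Λ) ℂ) :
    (ρ * transExp B ρf x₁ (transExp B ρf x₂ 1)).trace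
      = ∑ v, (ρf v).trace * ψ v x₁ * ψ v x₂ := by
  rw [hρ, Finset.sum_mul, trace_sum]
  refine Finset.sum_congr rfl fun v _ => ?_
  rw [trace_kronecker_single_mul_transExp, trace_kronecker_single_mul_transExp, mul_one,
    trace_kronecker, trace_single_eq_same, mul_one, hψ, hψ]
  ring

/-- The two-point function of the QMC:
`Tr(ρ E(x₁ ⊗ E(x₂ ⊗ 1))) = ∑ v, Tr(ρ_v) ψ_v(x₁) ψ_v(x₂)` where
`ψ_v(x) = (Tr ρ_v)⁻¹ ∑ i, Tr((B_v^i ρ_v (B_v^i)* ⊗ |i⟩⟨i|) x)`. -/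
theorem qmc_two_point_function
    {n Λ : Type*} [Fintype n] [Fintype Λ] [DecidableEq n] [DecidableEq Λ]
    (B : Λ → Λ → Matrix n n ℂ)
    (hB : ∀ j, ∑ i, (B i j)ᴴ * B i j = 1)
    (ρf : Λ → Matrix n n ℂ)
    (hpos : ∀ j, (ρf j).PosSemidef)
    (htr : ∀ j, 0 < (ρf j).trace)
    (ρ : Matrix (n × Λ) (n × Λ) ℂ)
    (hρ : ρ = ∑ j, (ρf j) ⊗ₖ (Matrix.single j j (1 : ℂ)))
    (ψ : Λ → Matrix (n × Λ) (n × Λ) ℂ → ℂ)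
    (hψ : ∀ v x, ψ v x = ((ρf v).trace)⁻¹ *
        ∑ i, (((B i v * ρf v * (B i v)ᴴ) ⊗ₖ Matrix.single i i (1 : ℂ)) * x).trace)
    (x₁ x₂ : Matrix (n × Λ) (n × Λ) ℂ) :
    (ρ * transExp B ρf x₁ (transExp B ρf x₂ 1)).trace
      = ∑ v, (ρf v).trace * ψ v x₁ * ψ v x₂ :=
  qmc_two_point_function_general B ρf ρ hρ ψ hψ x₁ x₂
end

section
/- With Ẽ as above, Tr(ρ Ẽ(x₀ ⊗ Ẽ(x₁ ⊗ I))) = ∑_{i₀,i₁} Tr(B_{i₀}^{i₁} ρ_{i₀} (B_{i₀}^{i₁})*) φ_{i₀}(x₀) φ_{i₁}(x₁), where φ_k(x) = Tr((ρ_k ⊗ |k⟩⟨k|)x)/Tr(ρ_k) and ρ = ∑_j ρ_j ⊗ |j⟩⟨j|. -/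
/-!
Block-diagonal matrices `⊕ⱼ aⱼ = ∑ⱼ aⱼ ⊗ |j⟩⟨j|` are stable under `y ↦ Ẽ(x ⊗ y)`: conjugation by
`M_j^i = B_j^i ⊗ |i⟩⟨j|` carries the `i`-th block, conjugated by `B_j^i`, to the `j`-th block and
annihilates the others, so `Ẽ(x ⊗ ⊕ᵢ aᵢ) = ⊕ⱼ φⱼ(x) ∑ᵢ (B_j^i)* aᵢ B_j^i`. Since `I = ⊕ⱼ I`, the
normalisation `∑ᵢ (B_j^i)* B_j^i = I` gives `Ẽ(x₁ ⊗ I) = ⊕ⱼ φⱼ(x₁) I`; applying the formula once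
more and multiplying by `ρ = ⊕ⱼ ρⱼ`, the trace splits blockwise and cyclicity of the trace turns
`Tr(ρⱼ (B_j^i)* B_j^i)` into `Tr(B_j^i ρⱼ (B_j^i)*)`.
-/

open Matrix Kronecker BigOperators ComplexOrder

/-- The dual transition expectation
`Ẽ(x ⊗ y) = ∑_{i,j} φ_j(x) • (M_j^i)* y M_j^i`, `φ_j(x) = Tr((ρ_j ⊗ |j⟩⟨j|) x)/Tr ρ_j`. -/
noncomputable def dualTransExp {n Λ : Type*} [Fintype n] [Fintype Λ] [DecidableEq n] [DecidableEq Λ]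
    (B : Λ → Λ → Matrix n n ℂ) (ρf : Λ → Matrix n n ℂ)
    (x y : Matrix (n × Λ) (n × Λ) ℂ) : Matrix (n × Λ) (n × Λ) ℂ :=
  ∑ i, ∑ j,
    (((ρf j ⊗ₖ Matrix.single j j (1 : ℂ)) * x).trace / (ρf j).trace) •
      (((B i j) ⊗ₖ Matrix.single i j (1 : ℂ))ᴴ * y *
        ((B i j) ⊗ₖ Matrix.single i j (1 : ℂ)))

namespace Matrix

variable {n Λ α : Type*} [DecidableEq Λ]

theorem kronecker_single_self_eq_blockDiagonal [MulZeroOneClass α] (A : Matrix n n α) (k : Λ) :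
    A ⊗ₖ single k k 1 = blockDiagonal (Pi.single k A) := by
  ext ⟨a, b⟩ ⟨c, d⟩
  simp only [kroneckerMap_apply, blockDiagonal_apply', single_apply, Pi.single_apply]
  aesop

theorem blockDiagonal_eq_sum_kronecker_single [Fintype Λ] [NonAssocSemiring α]
    (a : Λ → Matrix n n α) : blockDiagonal a = ∑ k, a k ⊗ₖ single k k 1 := by
  simp only [kronecker_single_self_eq_blockDiagonal, ← blockDiagonalAddMonoidHom_apply, ← map_sum,
    Finset.univ_sum_single]

theorem conjTranspose_kronecker_single_mul_blockDiagonal_mul [Fintype n] [Fintype Λ]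
    [CommSemiring α] [StarRing α] (B : Matrix n n α) (a : Λ → Matrix n n α) (i j : Λ) :
    (B ⊗ₖ single i j 1)ᴴ * blockDiagonal a * (B ⊗ₖ single i j 1)
      = blockDiagonal (Pi.single j (Bᴴ * a i * B)) := by
  have hconj (k : Λ) : (B ⊗ₖ single i j 1)ᴴ * (a k ⊗ₖ single k k 1) * (B ⊗ₖ single i j 1)
      = if k = i then (Bᴴ * a i * B) ⊗ₖ single j j 1 else 0 := by
    rw [conjTranspose_kronecker, conjTranspose_single, star_one, ← mul_kronecker_mul,
      ← mul_kronecker_mul]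
    split_ifs with hk
    · rw [hk, single_mul_single_same, single_mul_single_same, one_mul, one_mul]
    · rw [single_mul_single_of_ne (h := Ne.symm hk), zero_mul, kronecker_zero]
  rw [blockDiagonal_eq_sum_kronecker_single, Matrix.mul_sum, Matrix.sum_mul,
    Finset.sum_congr rfl fun k _ => hconj k, Finset.sum_ite_eq' Finset.univ,
    if_pos (Finset.mem_univ i), kronecker_single_self_eq_blockDiagonal]

end Matrix

section DualTransExp

variable {n Λ : Type*} [Fintype n] [Fintype Λ] [DecidableEq n] [DecidableEq Λ]

theorem dualTransExp_blockDiagonal (B : Λ → Λ → Matrix n n ℂ) (ρf : Λ → Matrix n n ℂ)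
    (x : Matrix (n × Λ) (n × Λ) ℂ) (a : Λ → Matrix n n ℂ) :
    dualTransExp B ρf x (blockDiagonal a) = blockDiagonal fun j =>
      (((ρf j ⊗ₖ single j j (1 : ℂ)) * x).trace / (ρf j).trace) •
        ∑ i, (B i j)ᴴ * a i * B i j := by
  simp only [dualTransExp, conjTranspose_kronecker_single_mul_blockDiagonal_mul,
    ← blockDiagonal_smul]
  simp only [← blockDiagonalAddMonoidHom_apply, ← map_sum]
  congr 1
  ext j : 1
  simp [Finset.sum_apply, Pi.single_apply, Finset.smul_sum]

theorem dualTransExp_one (B : Λ → Λ → Matrix n n ℂ) (hB : ∀ j, ∑ i, (B i j)ᴴ * B i j = 1)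
    (ρf : Λ → Matrix n n ℂ) (x : Matrix (n × Λ) (n × Λ) ℂ) :
    dualTransExp B ρf x 1 = blockDiagonal fun j =>
      (((ρf j ⊗ₖ single j j (1 : ℂ)) * x).trace / (ρf j).trace) • 1 := by
  rw [← blockDiagonal_one, dualTransExp_blockDiagonal]
  simp only [Pi.one_apply, Matrix.mul_one, hB]

end DualTransExp

theorem dual_qmc_two_point_function_general
    {n Λ : Type*} [Fintype n] [Fintype Λ] [DecidableEq n] [DecidableEq Λ]
    (B : Λ → Λ → Matrix n n ℂ)
    (hB : ∀ j, ∑ i, (B i j)ᴴ * B i j = 1)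
    (ρf : Λ → Matrix n n ℂ)
    (ρ : Matrix (n × Λ) (n × Λ) ℂ)
    (hρ : ρ = ∑ j, (ρf j) ⊗ₖ (Matrix.single j j (1 : ℂ)))
    (φ : Λ → Matrix (n × Λ) (n × Λ) ℂ → ℂ)
    (hφ : ∀ k x, φ k x = ((ρf k ⊗ₖ Matrix.single k k (1 : ℂ)) * x).trace / (ρf k).trace)
    (x₀ x₁ : Matrix (n × Λ) (n × Λ) ℂ) :
    (ρ * dualTransExp B ρf x₀ (dualTransExp B ρf x₁ 1)).trace
      = ∑ i₀, ∑ i₁, (B i₁ i₀ * ρf i₀ * (B i₁ i₀)ᴴ).trace * φ i₀ x₀ * φ i₁ x₁ := by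
  rw [hρ, ← blockDiagonal_eq_sum_kronecker_single, dualTransExp_one B hB,
    dualTransExp_blockDiagonal, ← blockDiagonal_mul, trace_blockDiagonal]
  simp only [← hφ]
  refine Finset.sum_congr rfl fun i₀ _ => ?_
  simp only [Matrix.mul_smul, Matrix.smul_mul, Matrix.mul_one, trace_smul,
    trace_sum, smul_eq_mul, Finset.mul_sum]
  refine Finset.sum_congr rfl fun i₁ _ => ?_
  rw [← Matrix.mul_assoc, trace_mul_cycle]
  ring

/-- `Tr(ρ Ẽ(x₀ ⊗ Ẽ(x₁ ⊗ 1))) = ∑_{i₀,i₁} Tr(B_{i₀}^{i₁} ρ_{i₀} (B_{i₀}^{i₁})*)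
φ_{i₀}(x₀) φ_{i₁}(x₁)` for `ρ = ∑ j, ρ_j ⊗ |j⟩⟨j|`. -/
theorem dual_qmc_two_point_function
    {n Λ : Type*} [Fintype n] [Fintype Λ] [DecidableEq n] [DecidableEq Λ]
    (B : Λ → Λ → Matrix n n ℂ)
    (hB : ∀ j, ∑ i, (B i j)ᴴ * B i j = 1)
    (ρf : Λ → Matrix n n ℂ)
    (hpos : ∀ j, (ρf j).PosSemidef)
    (htr : ∀ j, 0 < (ρf j).trace)
    (ρ : Matrix (n × Λ) (n × Λ) ℂ)
    (hρ : ρ = ∑ j, (ρf j) ⊗ₖ (Matrix.single j j (1 : ℂ)))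
    (φ : Λ → Matrix (n × Λ) (n × Λ) ℂ → ℂ)
    (hφ : ∀ k x, φ k x = ((ρf k ⊗ₖ Matrix.single k k (1 : ℂ)) * x).trace / (ρf k).trace)
    (x₀ x₁ : Matrix (n × Λ) (n × Λ) ℂ) :
    (ρ * dualTransExp B ρf x₀ (dualTransExp B ρf x₁ 1)).trace
      = ∑ i₀, ∑ i₁, (B i₁ i₀ * ρf i₀ * (B i₁ i₀)ᴴ).trace * φ i₀ x₀ * φ i₁ x₁ :=
  dual_qmc_two_point_function_general B hB ρf ρ hρ φ hφ x₀ x₁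
end
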